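/- For rooted trees $r, s, t$, the statistic $\beta(t,s,r)$ (the number of vertices $v$ of $r$ such that $t$ is isomorphic to $r$ with $s$ attached by an edge from its root to $v$) is nonzero if and only if $\alpha(s,t,r)$ (the number of edges $e$ of $t$ such that cutting $e$ yields root-component $r$ and pruned part $s$) is nonzero. -/

import Mathlib

namespace IE

/-- A rooted tree: a root together with a list of subtrees. -/
inductive RTree : Type
  | node : List RTree → RTree

namespace RTree

/-- Number of vertices of a rooted tree. -/
def size : RTree → ℕ
  | node cs => 1 + (cs.attach.map (fun c => size c.1)).sum
decreasing_by
  have h1 := List.sizeOf_lt_of_mem c.2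
  have h2 : sizeOf (RTree.node cs) = 1 + sizeOf cs := by simp
  omega

mutual
  /-- Positions (vertices) of a rooted tree, as index paths from the root. -/
  def pos : RTree → List (List ℕ)
    | node cs => [] :: posAux cs 0
  def posAux : List RTree → ℕ → List (List ℕ)
    | [], _ => []
    | c :: cs, i => (pos c).map (i :: ·) ++ posAux cs (i + 1)
end

theorem root_mem_pos (t : RTree) : [] ∈ pos t := by
  cases t with
  | node cs => simp [pos]

/-- The subtree rooted at a given position. -/
def subtreeAt : List ℕ → RTree → RTree
  | [], t => t
  | i :: p, node cs =>
    match cs[i]? with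
    | some c => subtreeAt p c
    | none => node cs

/-- The tree obtained by removing the subtree hanging at a given (non-root) position,
i.e. the root-side part `R_e` of the edge cut. -/
def removeAt : List ℕ → RTree → RTree
  | [], t => t
  | [i], node cs => node (cs.eraseIdx i)
  | i :: j :: p, node cs => node (cs.modify i (removeAt (j :: p)))

/-- `graft v t s` attaches the root of `s` by a new edge to the vertex `v` of `t`
(the operation `t ∪_v s`). -/
def graft : List ℕ → RTree → RTree → RTree
  | [], node cs, s => node (cs ++ [s])
  | i :: p, node cs, s => node (cs.modify i (fun c => graft p c s))

/-- Adjacency of positions: one is the parent of the other. -/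
def adj (p q : List ℕ) : Prop :=
  (p ≠ [] ∧ p.dropLast = q) ∨ (q ≠ [] ∧ q.dropLast = p)

/-- Rooted isomorphism: a bijection of vertex sets fixing the root and preserving
adjacency. -/
def Iso (s t : RTree) : Prop :=
  ∃ f : {p // p ∈ pos s} ≃ {p // p ∈ pos t},
    (f ⟨[], root_mem_pos s⟩).1 = [] ∧
      ∀ p q : {p // p ∈ pos s}, adj p.1 q.1 ↔ adj (f p).1 (f q).1

/-- The number of root-fixing graph automorphisms of a rooted tree. -/
noncomputable def xi (t : RTree) : ℕ :=
  Nat.card {f : {p // p ∈ pos t} ≃ {p // p ∈ pos t} //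
    (f ⟨[], root_mem_pos t⟩).1 = [] ∧
      ∀ p q : {p // p ∈ pos t}, adj p.1 q.1 ↔ adj (f p).1 (f q).1}

open Classical in
/-- `alpha t₁ t₂ t₃` = number of edges `e` of `t₂` (identified with the non-root
vertex below `e`) such that cutting `e` yields root part `R_e(t₂) ≅ t₃` and pruned
part `P_e(t₂) ≅ t₁`. -/
noncomputable def alpha (t1 t2 t3 : RTree) : ℕ :=
  ((pos t2).filter fun v =>
    decide (v ≠ [] ∧ Iso (subtreeAt v t2) t1 ∧ Iso (removeAt v t2) t3)).length

open Classical in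
/-- `beta t₁ t₂ t₃` = number of vertices `v` of `t₃` with `t₁ ≅ t₃ ∪_v t₂`. -/
noncomputable def beta (t1 t2 t3 : RTree) : ℕ :=
  ((pos t3).filter fun v => decide (Iso t1 (graft v t3 t2))).length


theorem mem_posAux {cs : List RTree} {k : ℕ} {p : List ℕ} :
    p ∈ posAux cs k ↔ ∃ j c, cs[j]? = some c ∧ ∃ q ∈ pos c, p = (k + j) :: q := by
  induction cs generalizing k with
  | nil => simp [posAux]
  | cons c cs ih =>
    simp only [posAux, List.mem_append, List.mem_map, ih]
    constructor
    · rintro (⟨q, hq, rfl⟩ | ⟨j, c', h, q, hq, rfl⟩)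
      · exact ⟨0, c, by simp, q, hq, by simp⟩
      · exact ⟨j + 1, c', by simpa using h, q, hq, by ring_nf⟩
    · rintro ⟨j, c', h, q, hq, rfl⟩
      cases j with
      | zero => simp at h; subst h; exact Or.inl ⟨q, hq, by simp⟩
      | succ j => exact Or.inr ⟨j, c', by simpa using h, q, hq, by ring_nf⟩

theorem cons_mem_pos {cs : List RTree} {j : ℕ} {q : List ℕ} :
    (j :: q) ∈ pos (node cs) ↔ ∃ c, cs[j]? = some c ∧ q ∈ pos c := by
  simp only [pos, List.mem_cons, mem_posAux]
  constructor
  · rintro (h | ⟨j', c, hc, q', hq', h⟩)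
    · simp at h
    · simp only [Nat.zero_add] at h
      injection h with h1 h2
      subst h1; subst h2
      exact ⟨c, hc, hq'⟩
  · rintro ⟨c, hc, hq⟩
    exact Or.inr ⟨j, c, hc, q, hq, by simp⟩

theorem mem_pos_node {cs : List RTree} {p : List ℕ} :
    p ∈ pos (node cs) ↔ p = [] ∨ ∃ j c, cs[j]? = some c ∧ ∃ q ∈ pos c, p = j :: q := by
  cases p with
  | nil => simp [root_mem_pos]
  | cons j q =>
    rw [cons_mem_pos]
    constructor
    · rintro ⟨c, hc, hq⟩; exact Or.inr ⟨j, c, hc, q, hq, rfl⟩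
    · rintro (h | ⟨j', c, hc, q', hq', h⟩)
      · simp at h
      · injection h with h1 h2; subst h1; subst h2
        exact ⟨c, hc, hq'⟩

theorem subtreeAt_cons {cs : List RTree} {i : ℕ} {p : List ℕ} {c : RTree}
    (hc : cs[i]? = some c) : subtreeAt (i :: p) (node cs) = subtreeAt p c := by
  simp [subtreeAt, hc]

theorem prefix_mem_pos {t : RTree} {p q : List ℕ} (hpq : p <+: q) (hq : q ∈ pos t) :
    p ∈ pos t := by
  induction p generalizing q t with
  | nil => exact root_mem_pos t
  | cons a p ih =>
    obtain ⟨r, rfl⟩ := hpq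
    cases t with
    | node cs =>
      rw [List.cons_append, cons_mem_pos] at hq
      obtain ⟨c, hc, hq⟩ := hq
      exact cons_mem_pos.2 ⟨c, hc, ih ⟨r, rfl⟩ hq⟩

theorem dropLast_mem_pos {t : RTree} {p : List ℕ} (hp : p ∈ pos t) :
    p.dropLast ∈ pos t := prefix_mem_pos (List.dropLast_prefix p) hp

theorem mem_pos_subtreeAt {t : RTree} {w : List ℕ} (hw : w ∈ pos t) {q : List ℕ} :
    q ∈ pos (subtreeAt w t) ↔ w ++ q ∈ pos t := by
  induction w generalizing t with
  | nil => simp [subtreeAt]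
  | cons i p ih =>
    cases t with
    | node cs =>
      obtain ⟨c, hc, hp⟩ := cons_mem_pos.1 hw
      rw [List.cons_append, cons_mem_pos, subtreeAt_cons hc, ih hp]
      constructor
      · intro h; exact ⟨c, hc, h⟩
      · rintro ⟨c', hc', h⟩; rw [hc] at hc'; injection hc' with h'; subst h'; exact h


def nChild : RTree → ℕ
  | node cs => cs.length

theorem removeAt_cons {i : ℕ} {l : List ℕ} (hl : l ≠ []) {cs : List RTree} :
    removeAt (i :: l) (node cs) = node (cs.modify i (removeAt l)) := by
  cases l with
  | nil => exact absurd rfl hl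
  | cons j p => rfl

theorem graft_cons {i : ℕ} {p : List ℕ} {cs : List RTree} {s : RTree} :
    graft (i :: p) (node cs) s = node (cs.modify i (fun c => graft p c s)) := rfl

theorem getElem?_modify_self {cs : List RTree} {i : ℕ} {c : RTree} (hc : cs[i]? = some c)
    (f : RTree → RTree) : (cs.modify i f)[i]? = some (f c) := by
  rw [List.getElem?_modify, hc]; simp

theorem getElem?_modify_ne {cs : List RTree} {i j : ℕ} (h : i ≠ j) (f : RTree → RTree) :
    (cs.modify i f)[j]? = cs[j]? := by
  rw [List.getElem?_modify]; cases cs[j]? <;> simp [h]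

theorem mem_pos_graft {t s : RTree} {v : List ℕ} (hv : v ∈ pos t) {p : List ℕ} :
    p ∈ pos (graft v t s) ↔
      p ∈ pos t ∨ ∃ q ∈ pos s, p = v ++ nChild (subtreeAt v t) :: q := by
  induction v generalizing t p with
  | nil =>
    cases t with
    | node cs =>
      show p ∈ pos (node (cs ++ [s])) ↔ _
      cases p with
      | nil => simp [root_mem_pos]
      | cons j q =>
        rw [cons_mem_pos, cons_mem_pos]
        simp only [subtreeAt, nChild, List.nil_append]
        constructor
        · rintro ⟨c, hc, hq⟩
          rcases lt_trichotomy j cs.length with h | h | h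
          · left; exact ⟨c, by rwa [List.getElem?_append_left h] at hc, hq⟩
          · subst h
            rw [List.getElem?_concat_length] at hc
            injection hc with hc; subst hc
            right; exact ⟨q, hq, rfl⟩
          · exfalso
            rw [List.getElem?_eq_none (by simp; omega)] at hc
            simp at hc
        · rintro (⟨c, hc, hq⟩ | ⟨q', hq', h⟩)
          · have hj : j < cs.length := by
              by_contra h
              rw [List.getElem?_eq_none (le_of_not_gt h)] at hc
              simp at hc
            exact ⟨c, by rwa [List.getElem?_append_left hj], hq⟩
          · injection h with h1 h2; subst h1; subst h2
            exact ⟨s, List.getElem?_concat_length .. , hq'⟩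
  | cons i v ih =>
    cases t with
    | node cs =>
      obtain ⟨c, hc, hvc⟩ := cons_mem_pos.1 hv
      rw [graft_cons, subtreeAt_cons hc]
      cases p with
      | nil => simp [root_mem_pos]
      | cons j q =>
        rw [cons_mem_pos, cons_mem_pos]
        constructor
        · rintro ⟨c', hc', hq⟩
          by_cases hij : i = j
          · subst hij
            rw [getElem?_modify_self hc] at hc'
            injection hc' with hc'; subst hc'
            rcases (ih hvc).1 hq with h | ⟨q', hq', rfl⟩
            · exact Or.inl ⟨c, hc, h⟩
            · exact Or.inr ⟨q', hq', rfl⟩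
          · rw [getElem?_modify_ne hij] at hc'
            exact Or.inl ⟨c', hc', hq⟩
        · rintro (⟨c', hc', hq⟩ | ⟨q', hq', h⟩)
          · by_cases hij : i = j
            · subst hij
              rw [hc] at hc'; injection hc' with hc'; subst hc'
              exact ⟨graft v c s, getElem?_modify_self hc _, (ih hvc).2 (Or.inl hq)⟩
            · exact ⟨c', by rw [getElem?_modify_ne hij, hc'], hq⟩
          · rw [List.cons_append] at h
            injection h with h1 h2; subst h1; subst h2
            exact ⟨graft v c s, getElem?_modify_self hc _,
              (ih hvc).2 (Or.inr ⟨q', hq', rfl⟩)⟩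

theorem not_full_child_mem_pos {t : RTree} {v : List ℕ} (hv : v ∈ pos t) (q : List ℕ) :
    v ++ nChild (subtreeAt v t) :: q ∉ pos t := by
  intro h
  rw [← mem_pos_subtreeAt hv] at h
  rcases hst : subtreeAt v t with ⟨cs⟩
  rw [hst] at h
  obtain ⟨c, hc, -⟩ := cons_mem_pos.1 h
  rw [List.getElem?_eq_none (by simp [hst, nChild])] at hc
  simp at hc

theorem subtreeAt_graft {t s : RTree} {v : List ℕ} (hv : v ∈ pos t) :
    subtreeAt (v ++ [nChild (subtreeAt v t)]) (graft v t s) = s := by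
  induction v generalizing t with
  | nil =>
    cases t with
    | node cs =>
      show subtreeAt [cs.length] (node (cs ++ [s])) = s
      rw [subtreeAt_cons (List.getElem?_concat_length ..)]
      rfl
  | cons i v ih =>
    cases t with
    | node cs =>
      obtain ⟨c, hc, hvc⟩ := cons_mem_pos.1 hv
      rw [graft_cons, subtreeAt_cons hc, List.cons_append,
        subtreeAt_cons (getElem?_modify_self hc _)]
      exact ih hvc

theorem removeAt_graft {t s : RTree} {v : List ℕ} (hv : v ∈ pos t) :
    removeAt (v ++ [nChild (subtreeAt v t)]) (graft v t s) = t := by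
  induction v generalizing t with
  | nil =>
    cases t with
    | node cs =>
      show removeAt [cs.length] (node (cs ++ [s])) = node cs
      show node ((cs ++ [s]).eraseIdx cs.length) = node cs
      rw [List.eraseIdx_append_of_length_le le_rfl]
      simp
  | cons i v ih =>
    cases t with
    | node cs =>
      obtain ⟨c, hc, hvc⟩ := cons_mem_pos.1 hv
      rw [subtreeAt_cons hc, graft_cons, List.cons_append,
        removeAt_cons (by simp)]
      congr 1
      apply List.ext_getElem?
      intro j
      by_cases hij : i = j
      · subst hij
        rw [getElem?_modify_self (getElem?_modify_self hc _) _, ih hvc, hc]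
      · rw [getElem?_modify_ne hij, getElem?_modify_ne hij]

def removeMap : List ℕ → List ℕ → List ℕ
  | [i], j :: q => (if i < j then j - 1 else j) :: q
  | i :: j :: w, a :: q => if a = i then a :: removeMap (j :: w) q else a :: q
  | _, q => q

def removeMapInv : List ℕ → List ℕ → List ℕ
  | [i], j :: q => (if i ≤ j then j + 1 else j) :: q
  | i :: j :: w, a :: q => if a = i then a :: removeMapInv (j :: w) q else a :: q
  | _, q => q

theorem removeMap_nil (w : List ℕ) : removeMap w [] = [] := by
  rcases w with _ | ⟨i, _ | ⟨j, w⟩⟩ <;> rfl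

theorem removeMapInv_nil (w : List ℕ) : removeMapInv w [] = [] := by
  rcases w with _ | ⟨i, _ | ⟨j, w⟩⟩ <;> rfl

theorem length_removeMap (w q : List ℕ) : (removeMap w q).length = q.length := by
  induction w, q using removeMap.induct with
  | case1 i j q => simp [removeMap]
  | case2 j w a q ih => simpa [removeMap] using ih
  | case3 i j w a q h => simp [removeMap, h]
  | case4 t q h1 h2 =>
    rcases t with _ | ⟨i, _ | ⟨j, w⟩⟩ <;> rcases q with _ | ⟨a, q⟩ <;>
      first
        | exact (h1 _ _ _ rfl rfl).elim
        | exact (h2 _ _ _ _ _ rfl rfl).elim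
        | rfl

theorem removeMap_eq_nil_iff {w q : List ℕ} : removeMap w q = [] ↔ q = [] := by
  rw [← List.length_eq_zero_iff, ← List.length_eq_zero_iff, length_removeMap]

theorem removeMapInv_removeMap {w q : List ℕ} (h : ¬ w <+: q) :
    removeMapInv w (removeMap w q) = q := by
  induction w, q using removeMap.induct with
  | case1 i j q =>
    have hij : i ≠ j := by
      intro he; exact h (by simp [he, List.cons_prefix_cons])
    by_cases hlt : i < j
    · simp only [removeMap, if_pos hlt, removeMapInv]
      rw [if_pos (by omega)]
      congr 1; omega
    · simp only [removeMap, if_neg hlt, removeMapInv]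
      rw [if_neg (by omega)]
  | case2 j w a q ih =>
    have h' : ¬ (j :: w) <+: q := by
      intro hp; exact h (List.cons_prefix_cons.2 ⟨rfl, hp⟩)
    simp [removeMap, removeMapInv, ih h']
  | case3 i j w a q hne =>
    simp only [removeMap, if_neg hne, removeMapInv, if_neg hne]
  | case4 t q h1 h2 =>
    rcases t with _ | ⟨i, _ | ⟨j, w⟩⟩ <;> rcases q with _ | ⟨a, q⟩ <;>
      first
        | exact (h1 _ _ _ rfl rfl).elim
        | exact (h2 _ _ _ _ _ rfl rfl).elim
        | rfl

theorem removeMap_injOn {w q1 q2 : List ℕ} (h1 : ¬ w <+: q1) (h2 : ¬ w <+: q2)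
    (h : removeMap w q1 = removeMap w q2) : q1 = q2 := by
  rw [← removeMapInv_removeMap h1, ← removeMapInv_removeMap h2, h]

theorem removeMap_of_length_lt {w q : List ℕ} (h : q.length < w.length) :
    removeMap w q = q := by
  induction w, q using removeMap.induct with
  | case1 i j q => simp at h
  | case2 j w a q ih =>
    simp [removeMap, ih (by simpa using h)]
  | case3 i j w a q hne => simp [removeMap, hne]
  | case4 t q h1 h2 =>
    rcases t with _ | ⟨i, _ | ⟨j, w⟩⟩ <;> rcases q with _ | ⟨a, q⟩ <;>
      first
        | exact (h1 _ _ _ rfl rfl).elim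
        | exact (h2 _ _ _ _ _ rfl rfl).elim
        | rfl

theorem dropLast_removeMap {w q : List ℕ} :
    (removeMap w q).dropLast = removeMap w q.dropLast := by
  induction w, q using removeMap.induct with
  | case1 i j q =>
    cases q with
    | nil => simp [removeMap, removeMap_nil]
    | cons b q' => simp [removeMap, List.dropLast_cons₂]
  | case2 j w a q ih =>
    cases q with
    | nil => simp [removeMap, removeMap_nil]
    | cons b q' =>
      have hne : removeMap (j :: w) (b :: q') ≠ [] := by
        simp [removeMap_eq_nil_iff]
      simp only [removeMap, List.dropLast_cons₂, if_true, eq_self_iff_true,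
        List.dropLast_cons_of_ne_nil hne, ih]
  | case3 i j w a q hne =>
    cases q with
    | nil => simp [removeMap, removeMap_nil, hne]
    | cons b q' => simp [removeMap, hne, List.dropLast_cons₂]
  | case4 t q h1 h2 =>
    rcases t with _ | ⟨i, _ | ⟨j, w⟩⟩ <;> rcases q with _ | ⟨a, q⟩ <;>
      first
        | exact (h1 _ _ _ rfl rfl).elim
        | exact (h2 _ _ _ _ _ rfl rfl).elim
        | simp [removeMap_nil]
        | rfl

theorem not_prefix_dropLast {w q : List ℕ} (h : ¬ w <+: q) : ¬ w <+: q.dropLast :=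
  fun hp => h (hp.trans (List.dropLast_prefix q))

theorem prefix_dropLast {p q : List ℕ} (h : p <+: q) (hl : p.length < q.length) :
    p <+: q.dropLast := by
  rw [List.prefix_iff_eq_take] at h ⊢
  rw [List.dropLast_eq_take, List.take_take]
  rw [min_eq_left (by omega)]
  exact h

theorem adj_append {w p q : List ℕ} : adj (w ++ p) (w ++ q) ↔ adj p q := by
  have key : ∀ p q : List ℕ,
      ((w ++ p ≠ [] ∧ (w ++ p).dropLast = w ++ q) ↔ (p ≠ [] ∧ p.dropLast = q)) := by
    intro p q
    cases p with
    | nil =>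
      simp only [List.append_nil, ne_eq, not_true_eq_false, false_and, iff_false, not_and]
      intro hw
      intro hd
      have := congrArg List.length hd
      rw [List.length_dropLast, List.length_append] at this
      have : w.length ≠ 0 := by simpa [List.length_eq_zero_iff] using hw
      omega
    | cons a p' =>
      rw [List.dropLast_append_cons]
      simp only [ne_eq, List.append_eq_nil_iff, List.cons_ne_nil, and_false, not_false_eq_true,
        true_and, List.append_cancel_left_eq, reduceCtorEq]
  unfold adj
  rw [key p q, key q p]

theorem removeMap_adj {w p q : List ℕ} (hp : ¬ w <+: p) (hq : ¬ w <+: q) :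
    adj p q ↔ adj (removeMap w p) (removeMap w q) := by
  have key : ∀ p q : List ℕ, ¬ w <+: p → ¬ w <+: q →
      ((p ≠ [] ∧ p.dropLast = q) ↔
        (removeMap w p ≠ [] ∧ (removeMap w p).dropLast = removeMap w q)) := by
    intro p q hp hq
    constructor
    · rintro ⟨hne, rfl⟩
      refine ⟨by simpa [removeMap_eq_nil_iff] using hne, ?_⟩
      rw [dropLast_removeMap]
    · rintro ⟨hne, hd⟩
      refine ⟨by simpa [removeMap_eq_nil_iff] using hne, ?_⟩
      rw [dropLast_removeMap] at hd
      exact removeMap_injOn (not_prefix_dropLast hp) hq hd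
  unfold adj
  rw [key p q hp hq, key q p hq hp]

theorem mem_pos_removeAt {t : RTree} {w : List ℕ} (hw : w ∈ pos t) (hne : w ≠ [])
    {p : List ℕ} :
    p ∈ pos (removeAt w t) ↔ ∃ q ∈ pos t, ¬ w <+: q ∧ removeMap w q = p := by
  induction w generalizing t p with
  | nil => exact absurd rfl hne
  | cons i w' ih =>
    cases t with
    | node cs =>
      obtain ⟨c, hc, hw'⟩ := cons_mem_pos.1 hw
      cases w' with
      | nil =>
        show p ∈ pos (node (cs.eraseIdx i)) ↔ _
        cases p with
        | nil =>
          simp only [root_mem_pos, true_iff]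
          exact ⟨[], root_mem_pos _, by simp [List.prefix_nil], removeMap_nil _⟩
        | cons a q' =>
          rw [cons_mem_pos]
          constructor
          · rintro ⟨c', hc', hq'⟩
            rw [List.getElem?_eraseIdx] at hc'
            by_cases hai : a < i
            · refine ⟨a :: q', cons_mem_pos.2 ⟨c', by rwa [if_pos hai] at hc', hq'⟩, ?_, ?_⟩
              · rw [List.cons_prefix_cons]; rintro ⟨rfl, -⟩; omega
              · have hn : ¬ i < a := by omega
                simp only [removeMap, if_neg hn]
            · refine ⟨(a + 1) :: q',
                cons_mem_pos.2 ⟨c', by rwa [if_neg hai] at hc', hq'⟩, ?_, ?_⟩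
              · rw [List.cons_prefix_cons]; rintro ⟨rfl, -⟩; omega
              · have hp : i < a + 1 := by omega
                simp only [removeMap, if_pos hp]
                congr 1
          · rintro ⟨q, hq, hpre, hrm⟩
            cases q with
            | nil => rw [removeMap_nil] at hrm; exact absurd hrm.symm (List.cons_ne_nil a q')
            | cons b q'' =>
              have hbi : b ≠ i := by
                intro h; exact hpre (by simp [h, List.cons_prefix_cons, List.nil_prefix])
              obtain ⟨c'', hc'', hq''⟩ := cons_mem_pos.1 hq
              simp only [removeMap] at hrm
              injection hrm with h1 h2
              subst h2
              refine ⟨c'', ?_, hq''⟩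
              rw [List.getElem?_eraseIdx]
              by_cases hib : i < b
              · rw [if_pos hib] at h1
                rw [if_neg (show ¬ a < i by omega), show a + 1 = b by omega]
                exact hc''
              · rw [if_neg hib] at h1
                rw [if_pos (show a < i by omega), show a = b by omega]
                exact hc''
      | cons j w'' =>
        rw [removeAt_cons (List.cons_ne_nil j w'')]
        cases p with
        | nil =>
          simp only [root_mem_pos, true_iff]
          exact ⟨[], root_mem_pos _, by simp [List.prefix_nil], removeMap_nil _⟩
        | cons a q' =>
          rw [cons_mem_pos]
          constructor
          · rintro ⟨c', hc', hq'⟩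
            by_cases hai : a = i
            · subst hai
              rw [getElem?_modify_self hc] at hc'
              injection hc' with hc'; subst hc'
              obtain ⟨q₂, hq₂, hpre₂, hrm₂⟩ := (ih hw' (List.cons_ne_nil j w'')).1 hq'
              refine ⟨a :: q₂, cons_mem_pos.2 ⟨c, hc, hq₂⟩, ?_, ?_⟩
              · rw [List.cons_prefix_cons]; rintro ⟨-, hp⟩; exact hpre₂ hp
              · simp [removeMap, hrm₂]
            · rw [getElem?_modify_ne (Ne.symm hai)] at hc'
              refine ⟨a :: q', cons_mem_pos.2 ⟨c', hc', hq'⟩, ?_, ?_⟩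
              · rw [List.cons_prefix_cons]; rintro ⟨h, -⟩; exact hai h.symm
              · simp only [removeMap, if_neg (show a ≠ i from hai)]
          · rintro ⟨q, hq, hpre, hrm⟩
            cases q with
            | nil => rw [removeMap_nil] at hrm; exact absurd hrm.symm (List.cons_ne_nil a q')
            | cons b q'' =>
              obtain ⟨c'', hc'', hq''⟩ := cons_mem_pos.1 hq
              by_cases hbi : b = i
              · subst hbi
                simp only [removeMap, if_pos rfl] at hrm
                injection hrm with h1 h2
                subst h1
                rw [hc] at hc''; injection hc'' with h; subst h
                refine ⟨removeAt (j :: w'') c, getElem?_modify_self hc _, ?_⟩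
                rw [ih hw' (List.cons_ne_nil j w'')]
                refine ⟨q'', hq'', ?_, h2⟩
                intro hp; exact hpre (List.cons_prefix_cons.2 ⟨rfl, hp⟩)
              · simp only [removeMap, if_neg hbi] at hrm
                injection hrm with h1 h2
                subst h1; subst h2
                exact ⟨c'', by rw [getElem?_modify_ne (fun h => hbi h.symm)]; exact hc'', hq''⟩

def IsoFn (f : List ℕ → List ℕ) (s t : RTree) : Prop :=
  Set.BijOn f {p | p ∈ pos s} {p | p ∈ pos t} ∧ f [] = [] ∧
    ∀ p ∈ pos s, ∀ q ∈ pos s, (adj p q ↔ adj (f p) (f q))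

theorem IsoFn.mem {f : List ℕ → List ℕ} {s t : RTree} (hf : IsoFn f s t)
    {p : List ℕ} (hp : p ∈ pos s) : f p ∈ pos t := hf.1.mapsTo hp

theorem IsoFn.inj {f : List ℕ → List ℕ} {s t : RTree} (hf : IsoFn f s t)
    {p q : List ℕ} (hp : p ∈ pos s) (hq : q ∈ pos s) (h : f p = f q) : p = q :=
  hf.1.injOn hp hq h

theorem IsoFn.surj {f : List ℕ → List ℕ} {s t : RTree} (hf : IsoFn f s t)
    {q : List ℕ} (hq : q ∈ pos t) : ∃ p ∈ pos s, f p = q := by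
  obtain ⟨p, hp, hfp⟩ := hf.1.surjOn hq
  exact ⟨p, hp, hfp⟩

theorem IsoFn.ne_nil {f : List ℕ → List ℕ} {s t : RTree} (hf : IsoFn f s t)
    {p : List ℕ} (hp : p ∈ pos s) (hne : p ≠ []) : f p ≠ [] := by
  intro h
  exact hne (hf.inj hp (root_mem_pos s) (by rw [h, hf.2.1]))

theorem iso_iff_isoFn {s t : RTree} : Iso s t ↔ ∃ f, IsoFn f s t := by
  constructor
  · rintro ⟨F, hroot, hadj⟩
    classical
    refine ⟨fun p => if h : p ∈ pos s then (F ⟨p, h⟩).1 else [], ?_, ?_, ?_⟩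
    · refine ⟨fun p hp => ?_, fun p hp q hq h => ?_, fun q hq => ?_⟩
      · simp only [Set.mem_setOf_eq] at hp ⊢
        rw [dif_pos hp]
        exact (F ⟨p, hp⟩).2
      · simp only [Set.mem_setOf_eq] at hp hq
        dsimp only at h
        rw [dif_pos hp, dif_pos hq] at h
        have := F.injective (Subtype.ext h)
        exact congrArg Subtype.val this
      · simp only [Set.mem_setOf_eq] at hq
        refine ⟨(F.symm ⟨q, hq⟩).1, (F.symm ⟨q, hq⟩).2, ?_⟩
        dsimp only
        rw [dif_pos (F.symm ⟨q, hq⟩).2]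
        have : F ⟨(F.symm ⟨q, hq⟩).1, (F.symm ⟨q, hq⟩).2⟩ = ⟨q, hq⟩ := by
          rw [show (⟨(F.symm ⟨q, hq⟩).1, (F.symm ⟨q, hq⟩).2⟩ :
            {p // p ∈ pos s}) = F.symm ⟨q, hq⟩ from rfl]
          exact F.apply_symm_apply _
        rw [this]
    · dsimp only; rw [dif_pos (root_mem_pos s)]; exact hroot
    · intro p hp q hq
      dsimp only
      rw [dif_pos hp, dif_pos hq]
      exact hadj ⟨p, hp⟩ ⟨q, hq⟩
  · rintro ⟨f, hf⟩
    have hbij : Function.Bijective (fun p : {p // p ∈ pos s} => (⟨f p.1, hf.mem p.2⟩ :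
        {p // p ∈ pos t})) := by
      constructor
      · intro p q h
        exact Subtype.ext (hf.inj p.2 q.2 (congrArg Subtype.val h))
      · intro q
        obtain ⟨p, hp, hfp⟩ := hf.surj q.2
        exact ⟨⟨p, hp⟩, Subtype.ext hfp⟩
    refine ⟨Equiv.ofBijective _ hbij, ?_, ?_⟩
    · show f [] = []
      exact hf.2.1
    · intro p q
      exact hf.2.2 p.1 p.2 q.1 q.2

theorem Iso.refl (t : RTree) : Iso t t :=
  ⟨Equiv.refl _, rfl, fun _ _ => Iff.rfl⟩

theorem Iso.symm {s t : RTree} : Iso s t → Iso t s := by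
  rintro ⟨F, hroot, hadj⟩
  refine ⟨F.symm, ?_, ?_⟩
  · have : F ⟨[], root_mem_pos s⟩ = ⟨[], root_mem_pos t⟩ := Subtype.ext hroot
    rw [← this, Equiv.symm_apply_apply]
  · intro p q
    have := hadj (F.symm p) (F.symm q)
    rwa [Equiv.apply_symm_apply, Equiv.apply_symm_apply, Iff.comm] at this

theorem Iso.trans {s t u : RTree} : Iso s t → Iso t u → Iso s u := by
  rintro ⟨F, hrF, haF⟩ ⟨G, hrG, haG⟩
  refine ⟨F.trans G, ?_, ?_⟩
  · show (G (F ⟨[], root_mem_pos s⟩)).1 = []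
    have : F ⟨[], root_mem_pos s⟩ = ⟨[], root_mem_pos t⟩ := Subtype.ext hrF
    rw [this]; exact hrG
  · intro p q
    exact (haF p q).trans (haG (F p) (F q))

theorem IsoFn.map_dropLast {f : List ℕ → List ℕ} {s t : RTree} (hf : IsoFn f s t) :
    ∀ n (p : List ℕ), p.length ≤ n → p ∈ pos s → f p.dropLast = (f p).dropLast := by
  intro n
  induction n with
  | zero =>
    intro p hl hp
    have hl2 : p = [] := List.length_eq_zero_iff.mp (Nat.le_zero.mp hl)
    subst hl2
    simp [hf.2.1]
  | succ n ih =>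
    intro p hl hp
    by_cases hne : p = []
    · subst hne; simp [hf.2.1]
    · have hadj : adj p.dropLast p := Or.inr ⟨hne, rfl⟩
      have hdp : p.dropLast ∈ pos s := dropLast_mem_pos hp
      rcases (hf.2.2 _ hdp _ hp).1 hadj with ⟨hne', h⟩ | ⟨-, h⟩
      · exfalso
        have hdd : p.dropLast.dropLast ∈ pos s := dropLast_mem_pos hdp
        have hlen : p.dropLast.length ≤ n := by
          have := congrArg List.length (List.dropLast_eq_take (l := p) ▸ rfl : p.dropLast = p.dropLast)
          have h0 : p.length ≠ 0 := by simpa [List.length_eq_zero_iff] using hne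
          rw [List.length_dropLast]; omega
        have := ih p.dropLast hlen hdp
        rw [← this] at h
        have heq := hf.inj hdd hp h
        have := congrArg List.length heq
        rw [List.length_dropLast, List.length_dropLast] at this
        have h0 : p.length ≠ 0 := by simpa [List.length_eq_zero_iff] using hne
        omega
      · exact h.symm

theorem IsoFn.dropLast {f : List ℕ → List ℕ} {s t : RTree} (hf : IsoFn f s t)
    {p : List ℕ} (hp : p ∈ pos s) : f p.dropLast = (f p).dropLast :=
  hf.map_dropLast p.length p le_rfl hp

theorem IsoFn.length {f : List ℕ → List ℕ} {s t : RTree} (hf : IsoFn f s t) :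
    ∀ n (p : List ℕ), p.length ≤ n → p ∈ pos s → (f p).length = p.length := by
  intro n
  induction n with
  | zero =>
    intro p hl hp
    have hl2 : p = [] := List.length_eq_zero_iff.mp (Nat.le_zero.mp hl)
    subst hl2
    simp [hf.2.1]
  | succ n ih =>
    intro p hl hp
    by_cases hne : p = []
    · subst hne; simp [hf.2.1]
    · have h0 : p.length ≠ 0 := by simpa [List.length_eq_zero_iff] using hne
      have hfe : f p ≠ [] := hf.ne_nil hp hne
      have hf0 : (f p).length ≠ 0 := by simpa [List.length_eq_zero_iff] using hfe
      have hdp : p.dropLast ∈ pos s := dropLast_mem_pos hp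
      have := ih p.dropLast (by rw [List.length_dropLast]; omega) hdp
      rw [hf.dropLast hp] at this
      rw [List.length_dropLast, List.length_dropLast] at this
      omega

theorem IsoFn.len {f : List ℕ → List ℕ} {s t : RTree} (hf : IsoFn f s t)
    {p : List ℕ} (hp : p ∈ pos s) : (f p).length = p.length :=
  hf.length p.length p le_rfl hp

theorem IsoFn.prefix_iff {f : List ℕ → List ℕ} {s t : RTree} (hf : IsoFn f s t) :
    ∀ n (p q : List ℕ), q.length ≤ n → p ∈ pos s → q ∈ pos s →
      (p <+: q ↔ f p <+: f q) := by
  intro n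
  induction n with
  | zero =>
    intro p q hl hp hq
    have hl2 : q = [] := List.length_eq_zero_iff.mp (Nat.le_zero.mp hl)
    subst hl2
    rw [hf.2.1]
    constructor
    · intro h
      rw [List.prefix_nil] at h
      subst h
      rw [hf.2.1]
    · intro h
      rw [List.prefix_nil] at h
      rw [List.prefix_nil]
      exact hf.inj hp (root_mem_pos s) (by rw [h, hf.2.1])
  | succ n ih =>
    intro p q hl hp hq
    by_cases heq : p.length = q.length
    · constructor
      · intro h
        rw [h.eq_of_length heq]
      · intro h
        rw [hf.inj hp hq (h.eq_of_length (by rw [hf.len hp, hf.len hq]; exact heq))]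
    · have hqne : q ≠ [] → q.dropLast ∈ pos s := fun _ => dropLast_mem_pos hq
      constructor
      · intro h
        have hlt : p.length < q.length := lt_of_le_of_ne h.length_le heq
        have hqn : q ≠ [] := by
          intro hn; subst hn; simp at hlt
        have h1 : p <+: q.dropLast := prefix_dropLast h hlt
        have h2 := (ih p q.dropLast (by rw [List.length_dropLast]; omega) hp
          (dropLast_mem_pos hq)).1 h1
        rw [hf.dropLast hq] at h2
        exact h2.trans (List.dropLast_prefix _)
      · intro h
        have hle : p.length ≤ q.length := by
          have := h.length_le
          rwa [hf.len hp, hf.len hq] at this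
        have hlt : p.length < q.length := lt_of_le_of_ne hle heq
        have hqn : q ≠ [] := by
          intro hn; subst hn; simp at hlt
        have h1 : f p <+: (f q).dropLast :=
          prefix_dropLast h (by rw [hf.len hp, hf.len hq]; exact hlt)
        rw [← hf.dropLast hq] at h1
        have h2 := (ih p q.dropLast (by rw [List.length_dropLast]; omega) hp
          (dropLast_mem_pos hq)).2 h1
        exact h2.trans (List.dropLast_prefix _)

theorem IsoFn.prefix_iff' {f : List ℕ → List ℕ} {s t : RTree} (hf : IsoFn f s t)
    {p q : List ℕ} (hp : p ∈ pos s) (hq : q ∈ pos s) : p <+: q ↔ f p <+: f q :=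
  hf.prefix_iff q.length p q le_rfl hp hq

theorem adj_comm {p q : List ℕ} : adj p q ↔ adj q p := by
  unfold adj; exact or_comm

theorem IsoFn.subtree {f : List ℕ → List ℕ} {t t' : RTree} (hf : IsoFn f t t')
    {w : List ℕ} (hw : w ∈ pos t) : Iso (subtreeAt w t) (subtreeAt (f w) t') := by
  rw [iso_iff_isoFn]
  have hw' : f w ∈ pos t' := hf.mem hw
  refine ⟨fun q => (f (w ++ q)).drop (f w).length, ⟨?_, ?_, ?_⟩, ?_, ?_⟩
  · -- MapsTo
    intro q hq
    simp only [Set.mem_setOf_eq] at hq ⊢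
    have hq' : w ++ q ∈ pos t := (mem_pos_subtreeAt hw).1 hq
    have hpre : f w <+: f (w ++ q) := (hf.prefix_iff' hw hq').1 (List.prefix_append w q)
    have hkey : f w ++ (f (w ++ q)).drop (f w).length = f (w ++ q) :=
      List.prefix_iff_eq_append.1 hpre
    rw [mem_pos_subtreeAt hw', hkey]
    exact hf.mem hq'
  · -- InjOn
    intro q1 hq1 q2 hq2 h
    simp only [Set.mem_setOf_eq] at hq1 hq2
    dsimp only at h
    have hq1' : w ++ q1 ∈ pos t := (mem_pos_subtreeAt hw).1 hq1
    have hq2' : w ++ q2 ∈ pos t := (mem_pos_subtreeAt hw).1 hq2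
    have hk1 : f w ++ (f (w ++ q1)).drop (f w).length = f (w ++ q1) :=
      List.prefix_iff_eq_append.1 ((hf.prefix_iff' hw hq1').1 (List.prefix_append w q1))
    have hk2 : f w ++ (f (w ++ q2)).drop (f w).length = f (w ++ q2) :=
      List.prefix_iff_eq_append.1 ((hf.prefix_iff' hw hq2').1 (List.prefix_append w q2))
    have : f (w ++ q1) = f (w ++ q2) := by
      rw [← hk1, ← hk2, h]
    have := hf.inj hq1' hq2' this
    exact List.append_cancel_left this
  · -- SurjOn
    intro p hp
    simp only [Set.mem_setOf_eq] at hp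
    have hp' : f w ++ p ∈ pos t' := (mem_pos_subtreeAt hw').1 hp
    obtain ⟨q0, hq0, hfq0⟩ := hf.surj hp'
    have hpre : w <+: q0 := by
      rw [hf.prefix_iff' hw hq0, hfq0]
      exact List.prefix_append _ _
    have heq : w ++ q0.drop w.length = q0 := List.prefix_iff_eq_append.1 hpre
    refine ⟨q0.drop w.length, ?_, ?_⟩
    · simp only [Set.mem_setOf_eq]
      rw [mem_pos_subtreeAt hw, heq]
      exact hq0
    · show (f (w ++ q0.drop w.length)).drop (f w).length = p
      rw [heq, hfq0, List.drop_left]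
  · -- root
    show (f (w ++ [])).drop (f w).length = []
    rw [List.append_nil, List.drop_length]
  · -- adj
    intro q1 hq1 q2 hq2
    dsimp only
    have hq1' : w ++ q1 ∈ pos t := (mem_pos_subtreeAt hw).1 hq1
    have hq2' : w ++ q2 ∈ pos t := (mem_pos_subtreeAt hw).1 hq2
    have hk1 : f w ++ (f (w ++ q1)).drop (f w).length = f (w ++ q1) :=
      List.prefix_iff_eq_append.1 ((hf.prefix_iff' hw hq1').1 (List.prefix_append w q1))
    have hk2 : f w ++ (f (w ++ q2)).drop (f w).length = f (w ++ q2) :=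
      List.prefix_iff_eq_append.1 ((hf.prefix_iff' hw hq2').1 (List.prefix_append w q2))
    calc adj q1 q2 ↔ adj (w ++ q1) (w ++ q2) := adj_append.symm
      _ ↔ adj (f (w ++ q1)) (f (w ++ q2)) := hf.2.2 _ hq1' _ hq2'
      _ ↔ adj (f w ++ (f (w ++ q1)).drop (f w).length)
            (f w ++ (f (w ++ q2)).drop (f w).length) := by rw [hk1, hk2]
      _ ↔ _ := adj_append

theorem IsoFn.remove {f : List ℕ → List ℕ} {t t' : RTree} (hf : IsoFn f t t')
    {w : List ℕ} (hw : w ∈ pos t) (hne : w ≠ []) :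
    Iso (removeAt w t) (removeAt (f w) t') := by
  rw [iso_iff_isoFn]
  have hw' : f w ∈ pos t' := hf.mem hw
  have hne' : f w ≠ [] := hf.ne_nil hw hne
  -- decomposition of members of pos (removeAt w t)
  have decomp : ∀ p ∈ pos (removeAt w t), ∃ q, q ∈ pos t ∧ ¬ w <+: q ∧
      removeMap w q = p ∧ removeMapInv w p = q := by
    intro p hp
    obtain ⟨q, hq, hpre, hrm⟩ := (mem_pos_removeAt hw hne).1 hp
    exact ⟨q, hq, hpre, hrm, by rw [← hrm, removeMapInv_removeMap hpre]⟩
  refine ⟨fun p => removeMap (f w) (f (removeMapInv w p)), ⟨?_, ?_, ?_⟩, ?_, ?_⟩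
  · -- MapsTo
    intro p hp
    simp only [Set.mem_setOf_eq] at hp ⊢
    obtain ⟨q, hq, hpre, hrm, hinv⟩ := decomp p hp
    rw [hinv]
    rw [mem_pos_removeAt hw' hne']
    refine ⟨f q, hf.mem hq, ?_, rfl⟩
    rw [← hf.prefix_iff' hw hq]
    exact hpre
  · -- InjOn
    intro p1 hp1 p2 hp2 h
    simp only [Set.mem_setOf_eq] at hp1 hp2
    obtain ⟨q1, hq1, hpre1, hrm1, hinv1⟩ := decomp p1 hp1
    obtain ⟨q2, hq2, hpre2, hrm2, hinv2⟩ := decomp p2 hp2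
    dsimp only at h
    rw [hinv1, hinv2] at h
    have hnp1 : ¬ f w <+: f q1 := by rw [← hf.prefix_iff' hw hq1]; exact hpre1
    have hnp2 : ¬ f w <+: f q2 := by rw [← hf.prefix_iff' hw hq2]; exact hpre2
    have := removeMap_injOn hnp1 hnp2 h
    have := hf.inj hq1 hq2 this
    rw [← hrm1, ← hrm2, this]
  · -- SurjOn
    intro p' hp'
    simp only [Set.mem_setOf_eq] at hp' ⊢
    obtain ⟨q', hq', hpre', hrm'⟩ := (mem_pos_removeAt hw' hne').1 hp'
    obtain ⟨q, hq, hfq⟩ := hf.surj hq'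
    have hpre : ¬ w <+: q := by
      rw [hf.prefix_iff' hw hq, hfq]
      exact hpre'
    refine ⟨removeMap w q, ?_, ?_⟩
    · simp only [Set.mem_setOf_eq]
      rw [mem_pos_removeAt hw hne]
      exact ⟨q, hq, hpre, rfl⟩
    · show removeMap (f w) (f (removeMapInv w (removeMap w q))) = p'
      rw [removeMapInv_removeMap hpre, hfq, hrm']
  · -- root
    show removeMap (f w) (f (removeMapInv w [])) = []
    rw [removeMapInv_nil, hf.2.1, removeMap_nil]
  · -- adj
    intro p1 hp1 p2 hp2
    obtain ⟨q1, hq1, hpre1, hrm1, hinv1⟩ := decomp p1 hp1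
    obtain ⟨q2, hq2, hpre2, hrm2, hinv2⟩ := decomp p2 hp2
    have hnp1 : ¬ f w <+: f q1 := by rw [← hf.prefix_iff' hw hq1]; exact hpre1
    have hnp2 : ¬ f w <+: f q2 := by rw [← hf.prefix_iff' hw hq2]; exact hpre2
    dsimp only
    rw [hinv1, hinv2]
    calc adj p1 p2 ↔ adj q1 q2 := by rw [← hrm1, ← hrm2]; exact (removeMap_adj hpre1 hpre2).symm
      _ ↔ adj (f q1) (f q2) := hf.2.2 _ hq1 _ hq2
      _ ↔ _ := removeMap_adj hnp1 hnp2

theorem graft_decomp {t r s : RTree} {w : List ℕ} (hw : w ∈ pos t) (hne : w ≠ [])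
    {f g : List ℕ → List ℕ} (hf : IsoFn f (removeAt w t) r) (hg : IsoFn g (subtreeAt w t) s) :
    Iso t (graft (f w.dropLast) r s) := by
  classical
  have hlw : 1 ≤ w.length := by
    cases w with
    | nil => exact absurd rfl hne
    | cons a w' => simp
  have hu_t : w.dropLast ∈ pos t := dropLast_mem_pos hw
  have hnwu : ¬ w <+: w.dropLast := by
    intro h
    have := h.length_le
    rw [List.length_dropLast] at this
    omega
  have hrmu : removeMap w w.dropLast = w.dropLast :=
    removeMap_of_length_lt (by rw [List.length_dropLast]; omega)
  have hu_rem : w.dropLast ∈ pos (removeAt w t) :=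
    (mem_pos_removeAt hw hne).2 ⟨w.dropLast, hu_t, hnwu, hrmu⟩
  have hv : f w.dropLast ∈ pos r := hf.mem hu_rem
  rw [iso_iff_isoFn]
  set v := f w.dropLast with hveq
  set m := nChild (subtreeAt v r) with hmeq
  have hnofull : ∀ x ∈ pos r, ¬ (v ++ [m]) <+: x := by
    intro x hx hp
    exact not_full_child_mem_pos hv [] (prefix_mem_pos hp hx)
  have hprefix_cons : ∀ x : List ℕ, (v ++ [m]) <+: v ++ m :: x := by
    intro x; exact ⟨x, by simp⟩
  have hadj_cons : ∀ a b : List ℕ, adj (v ++ m :: a) (v ++ m :: b) ↔ adj a b := by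
    intro a b
    have h1 : v ++ m :: a = (v ++ [m]) ++ a := by simp
    have h2 : v ++ m :: b = (v ++ [m]) ++ b := by simp
    rw [h1, h2]
    exact adj_append
  -- facts for prefix case
  have hA : ∀ q, q ∈ pos t → w <+: q →
      q.drop w.length ∈ pos (subtreeAt w t) ∧ w ++ q.drop w.length = q := by
    intro q hq hp
    have heq : w ++ q.drop w.length = q := List.prefix_iff_eq_append.1 hp
    refine ⟨?_, heq⟩
    rw [mem_pos_subtreeAt hw, heq]
    exact hq
  have hB : ∀ q, q ∈ pos t → ¬ w <+: q → removeMap w q ∈ pos (removeAt w t) := by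
    intro q hq hp
    exact (mem_pos_removeAt hw hne).2 ⟨q, hq, hp, rfl⟩
  set F : List ℕ → List ℕ :=
    fun q => if w <+: q then v ++ m :: g (q.drop w.length) else f (removeMap w q) with hFdef
  have hFpos : ∀ q, w <+: q → F q = v ++ m :: g (q.drop w.length) := by
    intro q hp; rw [hFdef]; dsimp only; rw [if_pos hp]
  have hFneg : ∀ q, ¬ w <+: q → F q = f (removeMap w q) := by
    intro q hp; rw [hFdef]; dsimp only; rw [if_neg hp]
  -- key adjacency fact for the mixed case
  have keyNP : ∀ q1 q2, q1 ∈ pos t → q2 ∈ pos t → ¬ w <+: q1 → w <+: q2 →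
      (adj q1 q2 ↔ adj (F q1) (F q2)) := by
    intro q1 q2 hq1 hq2 hp1 hp2
    obtain ⟨hd2, heq2⟩ := hA q2 hq2 hp2
    have hrm1 : removeMap w q1 ∈ pos (removeAt w t) := hB q1 hq1 hp1
    have hfr1 : f (removeMap w q1) ∈ pos r := hf.mem hrm1
    rw [hFpos q2 hp2, hFneg q1 hp1]
    have lhs_iff : adj q1 q2 ↔ (q1 = w.dropLast ∧ q2.drop w.length = []) := by
      constructor
      · rintro (⟨h1ne, hdl⟩ | ⟨h2ne, hdl⟩)
        · exfalso
          apply hp1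
          rw [← hdl] at hp2
          exact hp2.trans (List.dropLast_prefix q1)
        · by_cases hd2eq : q2.drop w.length = []
          · have hq2w : q2 = w := by rw [← heq2, hd2eq, List.append_nil]
            refine ⟨?_, hd2eq⟩
            rw [← hdl, hq2w]
          · exfalso
            apply hp1
            obtain ⟨b, d2', hbd⟩ := List.exists_cons_of_ne_nil hd2eq
            rw [← hdl, ← heq2, hbd, List.dropLast_append_cons]
            exact ⟨_, rfl⟩
      · rintro ⟨h1, h2⟩
        have hq2w : q2 = w := by rw [← heq2, h2, List.append_nil]
        right
        refine ⟨by rw [hq2w]; exact hne, by rw [hq2w, ← h1]⟩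
    have rhs_iff : adj (f (removeMap w q1)) (v ++ m :: g (q2.drop w.length)) ↔
        (q1 = w.dropLast ∧ q2.drop w.length = []) := by
      constructor
      · rintro (⟨h1ne, hdl⟩ | ⟨h2ne, hdl⟩)
        · exfalso
          apply hnofull _ hfr1
          have : (v ++ [m]) <+: (f (removeMap w q1)).dropLast := by
            rw [hdl]
            exact hprefix_cons _
          exact this.trans (List.dropLast_prefix _)
        · by_cases hgd : g (q2.drop w.length) = []
          · rw [hgd] at hdl
            rw [List.dropLast_concat] at hdl
            have hu1 : removeMap w q1 = w.dropLast := by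
              apply hf.inj hrm1 hu_rem
              rw [← hdl, hveq]
            have h1 : q1 = w.dropLast := by
              apply removeMap_injOn hp1 hnwu
              rw [hu1, hrmu]
            refine ⟨h1, ?_⟩
            apply hg.inj hd2 (root_mem_pos _)
            rw [hgd, hg.2.1]
          · exfalso
            apply hnofull _ hfr1
            rw [← hdl, List.dropLast_append_cons, List.dropLast_cons_of_ne_nil hgd]
            exact hprefix_cons _
      · rintro ⟨h1, h2⟩
        rw [h1, hrmu, h2, hg.2.1, ← hveq]
        right
        refine ⟨by simp, List.dropLast_concat⟩
    rw [lhs_iff, rhs_iff]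
  refine ⟨F, ⟨?_, ?_, ?_⟩, ?_, ?_⟩
  · -- MapsTo
    intro q hq
    simp only [Set.mem_setOf_eq] at hq ⊢
    rw [mem_pos_graft hv]
    by_cases hp : w <+: q
    · rw [hFpos q hp]
      exact Or.inr ⟨g (q.drop w.length), hg.mem (hA q hq hp).1, rfl⟩
    · rw [hFneg q hp]
      exact Or.inl (hf.mem (hB q hq hp))
  · -- InjOn
    intro q1 hq1 q2 hq2 h
    simp only [Set.mem_setOf_eq] at hq1 hq2
    by_cases hp1 : w <+: q1 <;> by_cases hp2 : w <+: q2
    · rw [hFpos q1 hp1, hFpos q2 hp2] at h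
      have h' := List.append_cancel_left h
      injection h' with _ h''
      have := hg.inj (hA q1 hq1 hp1).1 (hA q2 hq2 hp2).1 h''
      rw [← (hA q1 hq1 hp1).2, ← (hA q2 hq2 hp2).2, this]
    · exfalso
      rw [hFpos q1 hp1, hFneg q2 hp2] at h
      apply hnofull _ (hf.mem (hB q2 hq2 hp2))
      rw [← h]
      exact hprefix_cons _
    · exfalso
      rw [hFneg q1 hp1, hFpos q2 hp2] at h
      apply hnofull _ (hf.mem (hB q1 hq1 hp1))
      rw [h]
      exact hprefix_cons _
    · rw [hFneg q1 hp1, hFneg q2 hp2] at h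
      exact removeMap_injOn hp1 hp2 (hf.inj (hB q1 hq1 hp1) (hB q2 hq2 hp2) h)
  · -- SurjOn
    intro p hp
    simp only [Set.mem_setOf_eq] at hp ⊢
    rcases (mem_pos_graft hv).1 hp with hpr | ⟨q2, hq2, rfl⟩
    · obtain ⟨a, ha, hfa⟩ := hf.surj hpr
      obtain ⟨q, hq, hnp, hrm⟩ := (mem_pos_removeAt hw hne).1 ha
      exact ⟨q, hq, by rw [hFneg q hnp, hrm, hfa]⟩
    · obtain ⟨d, hd, hgd⟩ := hg.surj hq2
      refine ⟨w ++ d, (mem_pos_subtreeAt hw).1 hd, ?_⟩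
      rw [hFpos _ (List.prefix_append w d), List.drop_left, hgd]
  · -- root
    rw [hFneg [] (by rw [List.prefix_nil]; exact hne), removeMap_nil, hf.2.1]
  · -- adj
    intro q1 hq1 q2 hq2
    by_cases hp1 : w <+: q1 <;> by_cases hp2 : w <+: q2
    · obtain ⟨hd1, heq1⟩ := hA q1 hq1 hp1
      obtain ⟨hd2, heq2⟩ := hA q2 hq2 hp2
      rw [hFpos q1 hp1, hFpos q2 hp2]
      calc adj q1 q2 ↔ adj (w ++ q1.drop w.length) (w ++ q2.drop w.length) := by
            rw [heq1, heq2]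
        _ ↔ adj (q1.drop w.length) (q2.drop w.length) := adj_append
        _ ↔ adj (g (q1.drop w.length)) (g (q2.drop w.length)) := hg.2.2 _ hd1 _ hd2
        _ ↔ _ := (hadj_cons _ _).symm
    · rw [adj_comm (p := q1), adj_comm (p := F q1)]
      exact keyNP q2 q1 hq2 hq1 hp2 hp1
    · exact keyNP q1 q2 hq1 hq2 hp1 hp2
    · rw [hFneg q1 hp1, hFneg q2 hp2]
      calc adj q1 q2 ↔ adj (removeMap w q1) (removeMap w q2) := removeMap_adj hp1 hp2
        _ ↔ _ := hf.2.2 _ (hB q1 hq1 hp1) _ (hB q2 hq2 hp2)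

theorem key_equiv (r s t : RTree) :
    (∃ v ∈ pos r, Iso t (graft v r s)) ↔
      (∃ w ∈ pos t, w ≠ [] ∧ Iso (subtreeAt w t) s ∧ Iso (removeAt w t) r) := by
  constructor
  · rintro ⟨v, hv, hiso⟩
    obtain ⟨f, hf⟩ := iso_iff_isoFn.1 hiso.symm
    have hw' : v ++ [nChild (subtreeAt v r)] ∈ pos (graft v r s) :=
      (mem_pos_graft hv).2 (Or.inr ⟨[], root_mem_pos s, rfl⟩)
    have hw'ne : v ++ [nChild (subtreeAt v r)] ≠ [] := by simp
    refine ⟨f (v ++ [nChild (subtreeAt v r)]), hf.mem hw', hf.ne_nil hw' hw'ne, ?_, ?_⟩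
    · have := hf.subtree hw'
      rw [subtreeAt_graft hv] at this
      exact this.symm
    · have := hf.remove hw' hw'ne
      rw [removeAt_graft hv] at this
      exact this.symm
  · rintro ⟨w, hwt, hwne, hsub, hrem⟩
    obtain ⟨g, hg⟩ := iso_iff_isoFn.1 hsub
    obtain ⟨f, hf⟩ := iso_iff_isoFn.1 hrem
    have hlw : 1 ≤ w.length := by
      cases w with
      | nil => exact absurd rfl hwne
      | cons a w' => simp
    have hu_t : w.dropLast ∈ pos t := dropLast_mem_pos hwt
    have hnwu : ¬ w <+: w.dropLast := by
      intro h
      have := h.length_le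
      rw [List.length_dropLast] at this
      omega
    have hrmu : removeMap w w.dropLast = w.dropLast :=
      removeMap_of_length_lt (by rw [List.length_dropLast]; omega)
    have hu_rem : w.dropLast ∈ pos (removeAt w t) :=
      (mem_pos_removeAt hwt hwne).2 ⟨w.dropLast, hu_t, hnwu, hrmu⟩
    exact ⟨f w.dropLast, hf.mem hu_rem, graft_decomp hwt hwne hf hg⟩

/-- For rooted trees `r, s, t`, the statistic `β(t,s,r)` is nonzero if and only if
`α(s,t,r)` is nonzero. -/
theorem beta_ne_zero_iff_alpha_ne_zero (r s t : RTree) :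
    beta t s r ≠ 0 ↔ alpha s t r ≠ 0 := by
  have hb : beta t s r ≠ 0 ↔ ∃ v ∈ pos r, Iso t (graft v r s) := by
    unfold beta
    rw [Ne, List.length_eq_zero_iff, List.filter_eq_nil_iff]
    push_neg
    simp only [decide_eq_true_eq]
  have ha : alpha s t r ≠ 0 ↔
      ∃ w ∈ pos t, w ≠ [] ∧ Iso (subtreeAt w t) s ∧ Iso (removeAt w t) r := by
    unfold alpha
    rw [Ne, List.length_eq_zero_iff, List.filter_eq_nil_iff]
    push_neg
    simp only [decide_eq_true_eq]
  rw [hb, ha]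
  exact key_equiv r s t

end RTree

end IE
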